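/- Let A be a primitive axial algebra of Jordan type η over a field F with char F ≠ 2. Then there exists a nonzero symmetric bilinear form (·,·) on A that associates with the algebra product, i.e., (ab, c) = (a, bc) for all a, b, c ∈ A, and which satisfies (a, a) = 1 for every η-axis a ∈ A. -/

import Mathlib

universe u v

section Prelim

variable (F : Type u) {A : Type v} [Field F] [NonUnitalNonAssocCommRing A]
  [Module F A] [SMulCommClass F A A] [IsScalarTower F A A]

/-- The λ-eigenspace of the adjoint map `ad_a : x ↦ a * x`. -/
def eigSp (a : A) (l : F) : Submodule F A where
  carrier := {x | a * x = l • x}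
  add_mem' := by
    intro x y hx hy
    simp only [Set.mem_setOf_eq] at *
    rw [mul_add, hx, hy, smul_add]
  zero_mem' := by simp
  smul_mem' := by
    intro c x hx
    simp only [Set.mem_setOf_eq] at *
    rw [mul_smul_comm, hx, smul_smul, smul_smul, mul_comm]

/-- `a` is a (primitive) `η`-axis. -/
structure IsAxis (η : F) (a : A) : Prop where
  ne_zero : a ≠ 0
  idem : a * a = a
  decomp : eigSp F a 1 ⊔ eigSp F a 0 ⊔ eigSp F a η = ⊤
  prim : eigSp F a 1 = Submodule.span F {a}
  f11 : ∀ x ∈ eigSp F a 1, ∀ y ∈ eigSp F a 1, x * y ∈ eigSp F a 1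
  f00 : ∀ x ∈ eigSp F a 0, ∀ y ∈ eigSp F a 0, x * y ∈ eigSp F a 0
  f10 : ∀ x ∈ eigSp F a 1, ∀ y ∈ eigSp F a 0, x * y = 0
  fpe : ∀ x ∈ eigSp F a 1 ⊔ eigSp F a 0, ∀ y ∈ eigSp F a η, x * y ∈ eigSp F a η
  fee : ∀ x ∈ eigSp F a η, ∀ y ∈ eigSp F a η, x * y ∈ eigSp F a 1 ⊔ eigSp F a 0

/-- `τ` is the Miyamoto involution of the `η`-axis `a`. -/
structure IsMiyamoto (η : F) (a : A) (τ : A → A) : Prop where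
  fixes : ∀ x ∈ eigSp F a 1 ⊔ eigSp F a 0, τ x = x
  negates : ∀ x ∈ eigSp F a η, τ x = -x
  map_add : ∀ x y : A, τ (x + y) = τ x + τ y
  map_smul : ∀ (c : F) (x : A), τ (c • x) = c • τ x
  map_mul : ∀ x y : A, τ (x * y) = τ x * τ y
  bijective : Function.Bijective τ

/-- `c = φ_a(u)`, the projection of `u` to `F·a` w.r.t. the axis `a`. -/
def IsProjCoeff (η : F) (a u : A) (c : F) : Prop :=
  ∃ u0 ∈ eigSp F a 0, ∃ ue ∈ eigSp F a η, u = c • a + u0 + ue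

/-- `e` is an identity element of the subalgebra `N`. -/
def IsIdentOf (N : NonUnitalSubalgebra F A) (e : A) : Prop :=
  e ∈ N ∧ ∀ z ∈ N, e * z = z

/-- `ψ` is an `F`-algebra automorphism of `A`. -/
structure IsAlgAut (ψ : A → A) : Prop where
  map_add : ∀ x y : A, ψ (x + y) = ψ x + ψ y
  map_smul : ∀ (c : F) (x : A), ψ (c • x) = c • ψ x
  map_mul : ∀ x y : A, ψ (x * y) = ψ x * ψ y
  bijective : Function.Bijective ψ

/-- The graph `Δ_𝒜`: distinct axes are adjacent iff their product is nonzero. -/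
def axesGraph (𝒜 : Set A) : SimpleGraph 𝒜 where
  Adj x y := x ≠ y ∧ (x : A) * (y : A) ≠ 0
  symm := by
    constructor
    rintro x y ⟨hxy, hm⟩
    exact ⟨hxy.symm, by rwa [mul_comm]⟩
  loopless := by constructor; rintro x ⟨h, -⟩; exact h rfl

/-- Multiplication of the Jordan algebra of Clifford type `J(V,B) = F·e ⊕ V`. -/
def cliffMul {V : Type*} [AddCommGroup V] [Module F V]
    (B : V →ₗ[F] V →ₗ[F] F) (x y : F × V) : F × V :=
  (x.1 * y.1 + B x.2 y.2, x.1 • y.2 + y.1 • x.2)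

end Prelim

/-- An isomorphism of `A` with a Jordan algebra of Clifford type `J(V,B)`. -/
structure CliffordTypeIso (F : Type u) (A : Type v) [Field F]
    [NonUnitalNonAssocCommRing A] [Module F A] [SMulCommClass F A A]
    [IsScalarTower F A A] where
  V : Type v
  [instAdd : AddCommGroup V]
  [instMod : Module F V]
  B : V →ₗ[F] V →ₗ[F] F
  symm : ∀ v w : V, B v w = B w v
  iso : A ≃ₗ[F] F × V
  mul_compat : ∀ x y : A, iso (x * y) = cliffMul F B (iso x) (iso y)

/-!
For an `η`-axis `a` write `x = φ_a(x) a + x_0 + x_η` along `A = F a ⊕ A_0(a) ⊕ A_η(a)`.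
By the fusion rules `x ↦ x - 2 x_η` is an automorphism `τ_a` (the Miyamoto involution),
so `τ_a` permutes the axes and `φ_{τ_a b} ∘ τ_a = φ_b`. Evaluating `φ_a(b(ab))` in two ways
gives `φ_a(b) = φ_b(a)` for axes `a, b`. Since `ab = φ_a(b) a + (η/2)(b - τ_a b)`, the axes
span `A` and `φ_c(ab) = φ_a(bc)` for axes `a, b, c`. So `(a, x) := φ_a(x)` for `a` in a basis
of axes defines a symmetric bilinear form, associative because it is so on axes.
-/

section LinearAlgebra

theorem exists_symm_bilin_of_span_eq_top {K V : Type*} [Field K] [AddCommGroup V]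
    [Module K V] {X : Set V} (hX : Submodule.span K X = ⊤) (φ : X → V →ₗ[K] K)
    (hφ : ∀ x y : X, φ x y = φ y x) :
    ∃ Φ : V →ₗ[K] V →ₗ[K] K, (∀ x : X, Φ x = φ x) ∧ ∀ x y, Φ x y = Φ y x := by
  let b := Module.Basis.ofSpan hX.ge
  have hbX : ∀ i, b i ∈ X := fun i => Module.Basis.ofSpan_subset hX.ge ⟨i, rfl⟩
  let Φ := b.constr K fun i => φ ⟨b i, hbX i⟩
  have hflip : ∀ y : X, Φ.flip y = φ y := fun y =>
    b.ext fun i => by simpa [Φ, b.constr_basis] using hφ ⟨b i, hbX i⟩ y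
  have hΦ : ∀ x : X, Φ x = φ x := fun x =>
    LinearMap.ext_on hX fun y hy => (LinearMap.congr_fun (hflip ⟨y, hy⟩) x).trans (hφ _ _)
  have hsymm : Φ.flip = Φ :=
    LinearMap.ext_on hX fun x hx => by simp only [hflip ⟨x, hx⟩, hΦ ⟨x, hx⟩]
  exact ⟨Φ, hΦ, fun x y => LinearMap.congr_fun₂ hsymm y x⟩

theorem bilin_mul_assoc_of_span_eq_top {R M : Type*} [CommSemiring R]
    [NonUnitalNonAssocSemiring M] [Module R M] [SMulCommClass R M M] [IsScalarTower R M M]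
    {X : Set M}
    (hX : Submodule.span R X = ⊤) (Φ : M →ₗ[R] M →ₗ[R] R)
    (h : ∀ x ∈ X, ∀ y ∈ X, ∀ z ∈ X, Φ (x * y) z = Φ x (y * z)) (x y z : M) :
    Φ (x * y) z = Φ x (y * z) := by
  have h₁ : ∀ x ∈ X, ∀ y ∈ X, ∀ z, Φ (x * y) z = Φ x (y * z) := fun x hx y hy =>
    LinearMap.congr_fun <| LinearMap.ext_on hX (f := Φ (x * y))
      (g := Φ x ∘ₗ LinearMap.mulLeft R y) fun z hz => h x hx y hy z hz
  have h₂ : ∀ x ∈ X, ∀ y z, Φ (x * y) z = Φ x (y * z) := fun x hx y z =>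
    LinearMap.congr_fun (LinearMap.ext_on hX (f := Φ.flip z ∘ₗ LinearMap.mulLeft R x)
      (g := Φ x ∘ₗ LinearMap.mulRight R z) fun y hy => h₁ x hx y hy z) y
  exact LinearMap.congr_fun (LinearMap.ext_on hX (f := Φ.flip z ∘ₗ LinearMap.mulRight R y)
    (g := Φ.flip (y * z)) fun x hx => h₂ x hx y z) x

end LinearAlgebra

section Axis

variable {F : Type u} {A : Type v} [Field F] [NonUnitalNonAssocCommRing A]
  [Module F A] [SMulCommClass F A A] {η : F} {a : A}

theorem mem_eigSp {x : A} {l : F} : x ∈ eigSp F a l ↔ a * x = l • x := Iff.rfl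

theorem IsProjCoeff.add {x y : A} {c d : F} (hx : IsProjCoeff F η a x c)
    (hy : IsProjCoeff F η a y d) : IsProjCoeff F η a (x + y) (c + d) := by
  obtain ⟨u, hu, v, hv, rfl⟩ := hx
  obtain ⟨u', hu', v', hv', rfl⟩ := hy
  exact ⟨u + u', add_mem hu hu', v + v', add_mem hv hv', by module⟩

theorem IsProjCoeff.smul {x : A} {c : F} (hx : IsProjCoeff F η a x c) (r : F) :
    IsProjCoeff F η a (r • x) (r * c) := by
  obtain ⟨u, hu, v, hv, rfl⟩ := hx
  exact ⟨r • u, Submodule.smul_mem _ r hu, r • v, Submodule.smul_mem _ r hv, by module⟩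

namespace IsAxis

variable (ha : IsAxis F η a)
include ha

theorem mul_smul_add_add {c : F} {u v : A} (hu : u ∈ eigSp F a 0) (hv : v ∈ eigSp F a η) :
    a * (c • a + u + v) = c • a + η • v := by
  rw [mul_add, mul_add, mul_smul_comm, ha.idem, mem_eigSp.mp hu, mem_eigSp.mp hv, zero_smul,
    add_zero]

theorem exists_isProjCoeff (x : A) : ∃ c, IsProjCoeff F η a x c := by
  obtain ⟨y, hy, v, hv, rfl⟩ := Submodule.mem_sup.mp (ha.decomp ▸ Submodule.mem_top (x := x))
  obtain ⟨w, hw, u, hu, rfl⟩ := Submodule.mem_sup.mp hy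
  obtain ⟨c, rfl⟩ := Submodule.mem_span_singleton.mp (ha.prim ▸ hw)
  exact ⟨c, u, hu, v, hv, rfl⟩

theorem mul_mul_sub_of_isProjCoeff {x : A} {c : F} (h : IsProjCoeff F η a x c) :
    a * (a * x) - η • (a * x) = ((1 - η) * c) • a := by
  obtain ⟨u, hu, v, hv, rfl⟩ := h
  have hv' : a * (c • a + 0 + η • v) = c • a + η • (η • v) :=
    ha.mul_smul_add_add (zero_mem _) (Submodule.smul_mem _ η hv)
  rw [ha.mul_smul_add_add hu hv, ← add_zero (c • a), hv']
  module

theorem isProjCoeff_unique (hη1 : η ≠ 1) {x : A} {c d : F} (hc : IsProjCoeff F η a x c)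
    (hd : IsProjCoeff F η a x d) : c = d := by
  have h := (ha.mul_mul_sub_of_isProjCoeff hc).symm.trans (ha.mul_mul_sub_of_isProjCoeff hd)
  exact mul_left_cancel₀ (sub_ne_zero.mpr hη1.symm) (smul_left_injective F ha.ne_zero h)

end IsAxis

/-- The paper's `φ_a(x)`; a junk value unless `a` is an axis and `η ≠ 1`. -/
noncomputable def projCoeff (η : F) (a x : A) : F := Classical.epsilon (IsProjCoeff F η a x)

/-- The component `x_η ∈ A_η(a)` of `x`, read off from `a x = φ_a(x) a + η x_η`. -/
noncomputable def etaPart (η : F) (a x : A) : A := η⁻¹ • (a * x - projCoeff η a x • a)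

theorem mul_eq_projCoeff_add_etaPart (hη0 : η ≠ 0) (a x : A) :
    a * x = projCoeff η a x • a + η • etaPart η a x := by
  rw [etaPart, smul_inv_smul₀ hη0, add_sub_cancel]

namespace IsAxis

variable (ha : IsAxis F η a) (hη1 : η ≠ 1)
include ha

theorem isProjCoeff_projCoeff (x : A) : IsProjCoeff F η a x (projCoeff η a x) :=
  Classical.epsilon_spec (ha.exists_isProjCoeff x)

include hη1

theorem projCoeff_eq {x : A} {c : F} (h : IsProjCoeff F η a x c) : projCoeff η a x = c :=
  ha.isProjCoeff_unique hη1 (ha.isProjCoeff_projCoeff x) h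

theorem projCoeff_smul_add_add (c : F) {u v : A} (hu : u ∈ eigSp F a 0)
    (hv : v ∈ eigSp F a η) : projCoeff η a (c • a + u + v) = c :=
  ha.projCoeff_eq hη1 ⟨u, hu, v, hv, rfl⟩

theorem projCoeff_add (x y : A) :
    projCoeff η a (x + y) = projCoeff η a x + projCoeff η a y :=
  ha.projCoeff_eq hη1 ((ha.isProjCoeff_projCoeff x).add (ha.isProjCoeff_projCoeff y))

theorem projCoeff_smul (r : F) (x : A) : projCoeff η a (r • x) = r * projCoeff η a x :=
  ha.projCoeff_eq hη1 ((ha.isProjCoeff_projCoeff x).smul r)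

noncomputable def projCoeffₗ : A →ₗ[F] F where
  toFun := projCoeff η a
  map_add' := ha.projCoeff_add hη1
  map_smul' := ha.projCoeff_smul hη1

theorem projCoeff_sub (x y : A) :
    projCoeff η a (x - y) = projCoeff η a x - projCoeff η a y :=
  map_sub (ha.projCoeffₗ hη1) x y

theorem projCoeff_self : projCoeff η a a = 1 := by
  simpa using ha.projCoeff_smul_add_add hη1 1 (zero_mem _) (zero_mem _)

theorem projCoeff_of_mem_zero {u : A} (hu : u ∈ eigSp F a 0) : projCoeff η a u = 0 := by
  simpa using ha.projCoeff_smul_add_add hη1 0 hu (zero_mem _)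

theorem projCoeff_of_mem_eta {v : A} (hv : v ∈ eigSp F a η) : projCoeff η a v = 0 := by
  simpa using ha.projCoeff_smul_add_add hη1 0 (zero_mem _) hv

theorem etaPart_add (x y : A) : etaPart η a (x + y) = etaPart η a x + etaPart η a y := by
  simp only [etaPart, mul_add, ha.projCoeff_add hη1, add_smul, smul_sub, smul_add]
  abel

theorem etaPart_smul (r : F) (x : A) : etaPart η a (r • x) = r • etaPart η a x := by
  simp only [etaPart, mul_smul_comm, ha.projCoeff_smul hη1, mul_smul, ← smul_sub]
  rw [smul_comm]

variable (hη0 : η ≠ 0)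
include hη0

theorem etaPart_smul_add_add (c : F) {u v : A} (hu : u ∈ eigSp F a 0) (hv : v ∈ eigSp F a η) :
    etaPart η a (c • a + u + v) = v := by
  rw [etaPart, ha.projCoeff_smul_add_add hη1 c hu hv, ha.mul_smul_add_add hu hv,
    add_sub_cancel_left, inv_smul_smul₀ hη0]

theorem exists_decomposition (x : A) :
    ∃ u ∈ eigSp F a 0, x = projCoeff η a x • a + u + etaPart η a x := by
  obtain ⟨u, hu, v, hv, hx⟩ := ha.isProjCoeff_projCoeff x
  have hv' : etaPart η a x = v := by
    rw [hx]
    exact ha.etaPart_smul_add_add hη1 hη0 _ hu hv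
  exact ⟨u, hu, by rw [hv']; exact hx⟩

theorem etaPart_mem (x : A) : etaPart η a x ∈ eigSp F a η := by
  obtain ⟨u, hu, v, hv, hx⟩ := ha.isProjCoeff_projCoeff x
  rw [hx, ha.etaPart_smul_add_add hη1 hη0 _ hu hv]
  exact hv

theorem etaPart_of_mem_sup {x : A} (hx : x ∈ eigSp F a 1 ⊔ eigSp F a 0) :
    etaPart η a x = 0 := by
  obtain ⟨w, hw, u, hu, rfl⟩ := Submodule.mem_sup.mp hx
  obtain ⟨c, rfl⟩ := Submodule.mem_span_singleton.mp (ha.prim ▸ hw)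
  simpa using ha.etaPart_smul_add_add hη1 hη0 c hu (zero_mem _)

theorem etaPart_of_mem_eta {v : A} (hv : v ∈ eigSp F a η) : etaPart η a v = v := by
  simpa using ha.etaPart_smul_add_add hη1 hη0 0 (zero_mem _) hv

end IsAxis

end Axis

section Miyamoto

variable {F : Type u} {A : Type v} [Field F] [NonUnitalNonAssocCommRing A]
  [Module F A] [SMulCommClass F A A] {η : F} {a : A}

noncomputable def miyamoto (η : F) (a x : A) : A := x - (2 : F) • etaPart η a x

theorem etaPart_eq_miyamoto (hchar : (2 : F) ≠ 0) (x : A) :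
    etaPart η a x = (2 : F)⁻¹ • (x - miyamoto η a x) := by
  rw [miyamoto, sub_sub_cancel, inv_smul_smul₀ hchar]

namespace IsAxis

variable (ha : IsAxis F η a)
include ha

theorem mul_mem_sup {x y : A} (hx : x ∈ eigSp F a 1 ⊔ eigSp F a 0)
    (hy : y ∈ eigSp F a 1 ⊔ eigSp F a 0) : x * y ∈ eigSp F a 1 ⊔ eigSp F a 0 := by
  obtain ⟨x₁, hx₁, x₀, hx₀, rfl⟩ := Submodule.mem_sup.mp hx
  obtain ⟨y₁, hy₁, y₀, hy₀, rfl⟩ := Submodule.mem_sup.mp hy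
  have h₁₀ : x₁ * y₀ = 0 := ha.f10 x₁ hx₁ y₀ hy₀
  have h₀₁ : x₀ * y₁ = 0 := by rw [mul_comm]; exact ha.f10 y₁ hy₁ x₀ hx₀
  rw [add_mul, mul_add, mul_add, h₁₀, h₀₁, add_zero, zero_add]
  exact add_mem (Submodule.mem_sup_left (ha.f11 _ hx₁ _ hy₁))
    (Submodule.mem_sup_right (ha.f00 _ hx₀ _ hy₀))

theorem exists_mem_sup_add_mem_eta (x : A) :
    ∃ y ∈ eigSp F a 1 ⊔ eigSp F a 0, ∃ z ∈ eigSp F a η, y + z = x :=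
  Submodule.mem_sup.mp (ha.decomp ▸ Submodule.mem_top)

section Grading

variable {τ : A → A} (hadd : ∀ x y, τ (x + y) = τ x + τ y)
  (hfix : ∀ x ∈ eigSp F a 1 ⊔ eigSp F a 0, τ x = x)
  (hneg : ∀ x ∈ eigSp F a η, τ x = -x)
include hadd hfix hneg

/-- The fusion rules make `A = (A_1(a) ⊕ A_0(a)) ⊕ A_η(a)` a `ℤ/2`-grading of the algebra. -/
theorem map_mul_of_fixes_of_negates (x y : A) : τ (x * y) = τ x * τ y := by
  obtain ⟨xp, hxp, xm, hxm, rfl⟩ := ha.exists_mem_sup_add_mem_eta x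
  obtain ⟨yp, hyp, ym, hym, rfl⟩ := ha.exists_mem_sup_add_mem_eta y
  have heven : xp * yp + xm * ym ∈ eigSp F a 1 ⊔ eigSp F a 0 :=
    add_mem (ha.mul_mem_sup hxp hyp) (ha.fee _ hxm _ hym)
  have hodd : xp * ym + yp * xm ∈ eigSp F a η :=
    add_mem (ha.fpe _ hxp _ hym) (ha.fpe _ hyp _ hxm)
  have hxy : (xp + xm) * (yp + ym) = (xp * yp + xm * ym) + (xp * ym + yp * xm) := by
    rw [mul_comm yp xm]; noncomm_ring
  rw [hxy, hadd, hfix _ heven, hneg _ hodd, hadd, hadd, hfix _ hxp, hfix _ hyp, hneg _ hxm,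
    hneg _ hym, mul_comm yp xm]
  noncomm_ring

theorem involutive_of_fixes_of_negates : Function.Involutive τ := by
  intro x
  obtain ⟨xp, hxp, xm, hxm, rfl⟩ := ha.exists_mem_sup_add_mem_eta x
  rw [hadd, hfix _ hxp, hneg _ hxm, hadd, hfix _ hxp, hneg _ (neg_mem hxm), neg_neg]

end Grading

variable (hη1 : η ≠ 1)
include hη1

theorem miyamoto_add (x y : A) : miyamoto η a (x + y) = miyamoto η a x + miyamoto η a y := by
  simp only [miyamoto, ha.etaPart_add hη1, smul_add]
  abel

variable (hη0 : η ≠ 0)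
include hη0

theorem miyamoto_of_mem_sup {x : A} (hx : x ∈ eigSp F a 1 ⊔ eigSp F a 0) :
    miyamoto η a x = x := by
  rw [miyamoto, ha.etaPart_of_mem_sup hη1 hη0 hx, smul_zero, sub_zero]

theorem miyamoto_of_mem_eta {x : A} (hx : x ∈ eigSp F a η) : miyamoto η a x = -x := by
  rw [miyamoto, ha.etaPart_of_mem_eta hη1 hη0 hx, two_smul]
  abel

theorem miyamoto_miyamoto (x : A) : miyamoto η a (miyamoto η a x) = x :=
  ha.involutive_of_fixes_of_negates (ha.miyamoto_add hη1)
    (fun _ => ha.miyamoto_of_mem_sup hη1 hη0) (fun _ => ha.miyamoto_of_mem_eta hη1 hη0) x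

theorem isMiyamoto_miyamoto : IsMiyamoto F η a (miyamoto η a) := by
  refine ⟨fun _ => ha.miyamoto_of_mem_sup hη1 hη0, fun _ => ha.miyamoto_of_mem_eta hη1 hη0,
    ha.miyamoto_add hη1, fun r x => ?_, ha.map_mul_of_fixes_of_negates (ha.miyamoto_add hη1)
      (fun _ => ha.miyamoto_of_mem_sup hη1 hη0) (fun _ => ha.miyamoto_of_mem_eta hη1 hη0),
    Function.Involutive.bijective (ha.miyamoto_miyamoto hη1 hη0)⟩
  rw [miyamoto, miyamoto, ha.etaPart_smul hη1, smul_sub, smul_comm]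

end IsAxis

end Miyamoto

section Transport

variable {F : Type u} {A : Type v} [Field F] [NonUnitalNonAssocCommRing A]
  [Module F A] {ψ : A → A}

theorem IsMiyamoto.isAlgAut [SMulCommClass F A A] {η : F} {a : A}
    (h : IsMiyamoto F η a ψ) : IsAlgAut F ψ :=
  ⟨h.map_add, h.map_smul, h.map_mul, h.bijective⟩

namespace IsAlgAut

variable (hψ : IsAlgAut F ψ)
include hψ

def toLinearMap : A →ₗ[F] A := ⟨⟨ψ, hψ.map_add⟩, hψ.map_smul⟩

theorem toLinearMap_apply (x : A) : hψ.toLinearMap x = ψ x := rfl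

theorem mul_mem_map {S T U : Submodule F A} (h : ∀ x ∈ S, ∀ y ∈ T, x * y ∈ U) :
    ∀ x ∈ S.map hψ.toLinearMap, ∀ y ∈ T.map hψ.toLinearMap,
      x * y ∈ U.map hψ.toLinearMap := by
  rintro _ ⟨x, hx, rfl⟩ _ ⟨y, hy, rfl⟩
  exact ⟨x * y, h x hx y hy, hψ.map_mul x y⟩

variable [SMulCommClass F A A] {η : F}

theorem eigSp_map_eq (b : A) (l : F) :
    eigSp F (ψ b) l = (eigSp F b l).map hψ.toLinearMap := by
  ext x
  obtain ⟨x, rfl⟩ := hψ.bijective.surjective x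
  refine ⟨fun hx => ⟨x, ?_, rfl⟩, ?_⟩
  · exact hψ.bijective.injective (by rw [hψ.map_mul, hψ.map_smul]; exact hx)
  · rintro ⟨y, hy, hyx⟩
    obtain rfl := hψ.bijective.injective hyx
    rw [mem_eigSp, ← hψ.map_mul, mem_eigSp.mp hy, hψ.map_smul]

theorem isAxis {b : A} (hb : IsAxis F η b) : IsAxis F η (ψ b) := by
  have hmap := hψ.eigSp_map_eq b
  have hmap_sup : eigSp F (ψ b) 1 ⊔ eigSp F (ψ b) 0 =
      (eigSp F b 1 ⊔ eigSp F b 0).map hψ.toLinearMap := by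
    rw [hmap, hmap, Submodule.map_sup]
  refine ⟨?_, ?_, ?_, ?_, ?_, ?_, ?_, ?_, ?_⟩
  · exact fun h => hb.ne_zero <|
      hψ.bijective.injective (h.trans (map_zero hψ.toLinearMap).symm)
  · rw [← hψ.map_mul, hb.idem]
  · rw [hmap_sup, hmap, ← Submodule.map_sup, hb.decomp, Submodule.map_top,
      LinearMap.range_eq_top.mpr hψ.bijective.surjective]
  · rw [hmap, hb.prim, Submodule.map_span, Set.image_singleton, toLinearMap_apply]
  · rw [hmap]
    exact hψ.mul_mem_map hb.f11
  · rw [hmap]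
    exact hψ.mul_mem_map hb.f00
  · intro x hx y hy
    rw [hmap] at hx hy
    simpa using hψ.mul_mem_map (U := ⊥) (by simpa using hb.f10) x hx y hy
  · rw [hmap_sup, hmap]
    exact hψ.mul_mem_map hb.fpe
  · rw [hmap_sup, hmap]
    exact hψ.mul_mem_map hb.fee

theorem projCoeff_apply {b : A} (hb : IsAxis F η b) (hη1 : η ≠ 1) (x : A) :
    projCoeff η (ψ b) (ψ x) = projCoeff η b x := by
  obtain ⟨u, hu, v, hv, hx⟩ := hb.isProjCoeff_projCoeff x
  refine (hψ.isAxis hb).projCoeff_eq hη1 ⟨ψ u, ?_, ψ v, ?_, ?_⟩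
  · rw [hψ.eigSp_map_eq]
    exact ⟨u, hu, rfl⟩
  · rw [hψ.eigSp_map_eq]
    exact ⟨v, hv, rfl⟩
  · rw [← hψ.map_smul, ← hψ.map_add, ← hψ.map_add, ← hx]

end IsAlgAut

end Transport

section Symmetry

variable {F : Type u} {A : Type v} [Field F] [NonUnitalNonAssocCommRing A]
  [Module F A] [SMulCommClass F A A] {η : F} {a b c : A}

namespace IsAxis

variable (ha : IsAxis F η a) (hη1 : η ≠ 1) (hη0 : η ≠ 0)
include ha hη1 hη0

theorem projCoeff_self_mul (x : A) : projCoeff η a (a * x) = projCoeff η a x := by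
  rw [mul_eq_projCoeff_add_etaPart hη0, ha.projCoeff_add hη1, ha.projCoeff_smul hη1,
    ha.projCoeff_smul hη1, ha.projCoeff_self hη1, ha.projCoeff_of_mem_eta hη1
      (ha.etaPart_mem hη1 hη0 x), mul_one, mul_zero, add_zero]

theorem projCoeff_mul_of_mem_zero (x : A) {u : A} (hu : u ∈ eigSp F a 0) :
    projCoeff η a (x * u) = 0 := by
  obtain ⟨w, hw, hx⟩ := ha.exists_decomposition hη1 hη0 x
  have hau : u * a = 0 := by rw [mul_comm]; simpa using mem_eigSp.mp hu
  have hwu : u * w ∈ eigSp F a 0 := ha.f00 u hu w hw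
  have hvu : u * etaPart η a x ∈ eigSp F a η :=
    ha.fpe u (Submodule.mem_sup_right hu) _ (ha.etaPart_mem hη1 hη0 x)
  rw [mul_comm, hx, mul_add, mul_add, mul_smul_comm, hau, smul_zero, zero_add,
    ha.projCoeff_add hη1, ha.projCoeff_of_mem_zero hη1 hwu, ha.projCoeff_of_mem_eta hη1 hvu,
    add_zero]

/-- Evaluating `φ_a` on `b(ab)` in two ways: expanding `ab` along the eigenspaces of `a`, and
using `b(ba) - η ba = (1 - η) φ_b(a) b`. -/
theorem projCoeff_mul_self_eq (hb : IsAxis F η b) :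
    projCoeff η a b * projCoeff η a b = projCoeff η b a * projCoeff η a b := by
  obtain ⟨b0, hb0, hbdec⟩ := ha.exists_decomposition hη1 hη0 b
  set β := projCoeff η a b
  set α := projCoeff η b a
  set be := etaPart η a b
  have hφ : ∀ x y : A, ∀ r s : F,
      projCoeff η a (r • x + s • y) = r * projCoeff η a x + s * projCoeff η a y := by
    intro x y r s
    rw [ha.projCoeff_add hη1, ha.projCoeff_smul hη1, ha.projCoeff_smul hη1]
  have hba : projCoeff η a (b * a) = β := by rw [mul_comm, ha.projCoeff_self_mul hη1 hη0]
  have hbbe : projCoeff η a (b * be) = β - β * β := by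
    have hbb : b * b = β • (b * a) + b * b0 + b * be := by
      nth_rewrite 2 [hbdec]
      rw [mul_add, mul_add, mul_smul_comm]
    have h := congrArg (projCoeff η a) hb.idem
    rw [hbb, ha.projCoeff_add hη1, ha.projCoeff_add hη1, ha.projCoeff_smul hη1, hba,
      ha.projCoeff_mul_of_mem_zero hη1 hη0 b hb0] at h
    linear_combination h
  have h_along_a : b * (a * b) = β • (b * a) + η • (b * be) := by
    rw [mul_eq_projCoeff_add_etaPart hη0 a b, mul_add, mul_smul_comm, mul_smul_comm]
  have h_along_b : b * (a * b) = η • (a * b) + ((1 - η) * α) • b := by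
    rw [mul_comm a b, ← hb.mul_mul_sub_of_isProjCoeff (hb.isProjCoeff_projCoeff a)]
    abel
  have h := congrArg (projCoeff η a) (h_along_a.symm.trans h_along_b)
  rw [hφ, hφ, hba, hbbe, ha.projCoeff_self_mul hη1 hη0] at h
  have hη : (1 - η) * (β * β - α * β) = 0 := by linear_combination h
  exact sub_eq_zero.mp ((mul_eq_zero.mp hη).resolve_left (sub_ne_zero.mpr hη1.symm))

theorem projCoeff_comm (hb : IsAxis F η b) : projCoeff η a b = projCoeff η b a := by
  have hab := ha.projCoeff_mul_self_eq hη1 hη0 hb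
  have hba := hb.projCoeff_mul_self_eq hη1 hη0 ha
  by_cases h : projCoeff η a b = 0
  · rw [h, zero_mul] at hba
    exact h.trans (mul_self_eq_zero.mp hba).symm
  · exact mul_right_cancel₀ h hab

theorem isAxis_miyamoto (hb : IsAxis F η b) : IsAxis F η (miyamoto η a b) :=
  (ha.isMiyamoto_miyamoto hη1 hη0).isAlgAut.isAxis hb

theorem projCoeff_miyamoto_comm (hb : IsAxis F η b) (hc : IsAxis F η c) :
    projCoeff η c (miyamoto η a b) = projCoeff η b (miyamoto η a c) := by
  have hτ := (ha.isMiyamoto_miyamoto hη1 hη0).isAlgAut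
  calc projCoeff η c (miyamoto η a b)
      = projCoeff η (miyamoto η a b) c :=
        hc.projCoeff_comm hη1 hη0 (ha.isAxis_miyamoto hη1 hη0 hb)
    _ = projCoeff η (miyamoto η a b) (miyamoto η a (miyamoto η a c)) := by
      rw [ha.miyamoto_miyamoto hη1 hη0]
    _ = projCoeff η b (miyamoto η a c) := hτ.projCoeff_apply hb hη1 _

variable (hchar : (2 : F) ≠ 0)
include hchar

theorem projCoeff_mul_comm (hb : IsAxis F η b) (hc : IsAxis F η c) :
    projCoeff η c (a * b) = projCoeff η b (a * c) := by
  simp only [mul_eq_projCoeff_add_etaPart hη0 a, etaPart_eq_miyamoto hchar,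
    hb.projCoeff_add hη1, hb.projCoeff_smul hη1, hb.projCoeff_sub hη1, hc.projCoeff_add hη1,
    hc.projCoeff_smul hη1, hc.projCoeff_sub hη1]
  rw [ha.projCoeff_miyamoto_comm hη1 hη0 hb hc, hc.projCoeff_comm hη1 hη0 ha,
    hc.projCoeff_comm hη1 hη0 hb, hb.projCoeff_comm hη1 hη0 ha]
  ring

theorem mul_mem_span_axes (hb : IsAxis F η b) :
    a * b ∈ Submodule.span F {x : A | IsAxis F η x} := by
  rw [mul_eq_projCoeff_add_etaPart hη0 a b, etaPart_eq_miyamoto hchar]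
  have hmem {x : A} (hx : IsAxis F η x) : x ∈ Submodule.span F {x : A | IsAxis F η x} :=
    Submodule.subset_span hx
  exact add_mem (Submodule.smul_mem _ _ (hmem ha)) (Submodule.smul_mem _ _
    (Submodule.smul_mem _ _ (sub_mem (hmem hb) (hmem (ha.isAxis_miyamoto hη1 hη0 hb)))))

theorem projCoeff_mul_eq (hb : IsAxis F η b) (hc : IsAxis F η c) :
    projCoeff η c (a * b) = projCoeff η a (b * c) := by
  rw [ha.projCoeff_mul_comm hη1 hη0 hchar hb hc, mul_comm a c,
    hc.projCoeff_mul_comm hη1 hη0 hchar ha hb, mul_comm c b]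

end IsAxis

theorem span_axes_eq_top [IsScalarTower F A A] (hη1 : η ≠ 1) (hη0 : η ≠ 0)
    (hchar : (2 : F) ≠ 0) {𝒜 : Set A} (h𝒜 : ∀ a ∈ 𝒜, IsAxis F η a)
    (hgen : NonUnitalAlgebra.adjoin F 𝒜 = ⊤) :
    Submodule.span F {x : A | IsAxis F η x} = ⊤ := by
  set S := Submodule.span F {x : A | IsAxis F η x}
  have hmul : ∀ x ∈ S, ∀ y ∈ S, LinearMap.mul F A x y ∈ S := by
    refine Submodule.map₂_le.mp ?_
    rw [Submodule.map₂_span_span, Submodule.span_le]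
    rintro _ ⟨x, hx, y, hy, rfl⟩
    exact hx.mul_mem_span_axes hη1 hη0 hchar hy
  have hle := NonUnitalAlgebra.adjoin_le
    (S := S.toNonUnitalSubalgebra fun x y hx hy => hmul x hx y hy)
    (fun y hy => Submodule.subset_span (h𝒜 y hy))
  rw [hgen] at hle
  exact eq_top_iff.mpr hle

end Symmetry

/-- Every primitive axial algebra of Jordan type `η` admits a
Frobenius form: a nonzero symmetric bilinear form `(·,·)` with
`(ab, c) = (a, bc)` for all `a, b, c`, and `(a, a) = 1` for every `η`-axis. -/
theorem exists_frobenius_form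
    {F : Type u} {A : Type v} [Field F] [NonUnitalNonAssocCommRing A]
    [Module F A] [SMulCommClass F A A] [IsScalarTower F A A]
    (hchar : (2 : F) ≠ 0) (η : F) (hη0 : η ≠ 0) (hη1 : η ≠ 1)
    (𝒜 : Set A) (hne : 𝒜.Nonempty) (h𝒜 : ∀ a ∈ 𝒜, IsAxis F η a)
    (hgen : NonUnitalAlgebra.adjoin F 𝒜 = ⊤) :
    ∃ Φ : A →ₗ[F] A →ₗ[F] F,
      Φ ≠ 0 ∧
      (∀ x y : A, Φ x y = Φ y x) ∧
      (∀ x y z : A, Φ (x * y) z = Φ x (y * z)) ∧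
      (∀ a : A, IsAxis F η a → Φ a a = 1) := by
  have hspan := span_axes_eq_top hη1 hη0 hchar h𝒜 hgen
  obtain ⟨Φ, hΦ, hsymm⟩ := exists_symm_bilin_of_span_eq_top hspan
    (fun a => a.2.projCoeffₗ hη1) fun a b => a.2.projCoeff_comm hη1 hη0 b.2
  have hΦ_apply {a : A} (ha : IsAxis F η a) (x : A) : Φ a x = projCoeff η a x :=
    LinearMap.congr_fun (hΦ ⟨a, ha⟩) x
  have hΦ_self {a : A} (ha : IsAxis F η a) : Φ a a = 1 := by
    rw [hΦ_apply ha, ha.projCoeff_self hη1]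
  obtain ⟨a, ha⟩ := hne
  refine ⟨Φ, fun h => ?_, hsymm, bilin_mul_assoc_of_span_eq_top hspan Φ ?_,
    fun a ha => hΦ_self ha⟩
  · simpa [h] using hΦ_self (h𝒜 a ha)
  · intro x hx y hy z hz
    rw [hsymm, hΦ_apply hz, hΦ_apply hx]
    exact hx.projCoeff_mul_eq hη1 hη0 hchar hy hz
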